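/- Let T be a bounded operator on a complex Hilbert space H, A := sqrt(T* T) with spectral measure E. Then the set of vectors x ∈ H satisfying ‖T x‖ = ‖T‖·‖x‖ is exactly the closed subspace E({‖T‖})H, the range of the spectral projection of A at the singleton {‖T‖}. -/

import Mathlib

/-! Since `A ∘ A = T† ∘ T`, `‖A x‖ = ‖T x‖` for every `x`, hence `‖A‖ = ‖T‖`, and `T` may be
replaced by `A`. The scalar measure `μ x` has total mass `‖x‖ ^ 2`, satisfies
`μ x S = 0 ↔ E S x = 0`, and `‖A x‖ ^ 2 = ∫ t ^ 2 ∂(μ x)`. Applied to `y = E S x`, whose measure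
lives on `S`, the last identity shows that `E S = 0` for every bounded `S` lying to the right of
`‖A‖`, so `μ x` lives on `[0, ‖A‖]`. Then `‖A‖ ^ 2 ‖x‖ ^ 2 - ‖A x‖ ^ 2 = ∫ (‖A‖ ^ 2 - t ^ 2) ∂(μ x)`
with an integrand that is nonnegative there and vanishes only at `‖A‖`: equality holds iff
`μ x` is concentrated at `‖A‖`, i.e. iff `E {‖A‖}ᶜ x = 0`, i.e. iff `x ∈ E {‖A‖} H`. -/

open MeasureTheory

/-- `E` is the projection-valued spectral measure of the bounded positive operator `A`
on a complex Hilbert space, with `μ x` the associated scalar Borel measures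
`S ↦ ⟪x, E S x⟫`, so that `A = ∫ λ dE(λ)` (expressed through the quadratic forms
`⟪x, A x⟫ = ∫ λ dμ_x(λ)` and `‖A x‖² = ∫ λ² dμ_x(λ)`). -/
structure IsSpectralMeasureOf {H : Type*} [NormedAddCommGroup H] [InnerProductSpace ℂ H]
    [CompleteSpace H] (A : H →L[ℂ] H) (E : Set ℝ → (H →L[ℂ] H))
    (μ : H → Measure ℝ) : Prop where
  selfAdjoint : ∀ S : Set ℝ, IsSelfAdjoint (E S)
  idem : ∀ S : Set ℝ, E S ∘L E S = E S
  inter : ∀ S S' : Set ℝ, MeasurableSet S → MeasurableSet S' →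
    E S ∘L E S' = E (S ∩ S')
  empty : E ∅ = 0
  univ : E Set.univ = 1
  countablyAdditive : ∀ f : ℕ → Set ℝ, Pairwise (Function.onFun Disjoint f) →
    (∀ n, MeasurableSet (f n)) →
    ∀ x : H, HasSum (fun n => E (f n) x) (E (⋃ n, f n) x)
  suppNonneg : E (Set.Iio 0) = 0
  mu_eq : ∀ (x : H) (S : Set ℝ), MeasurableSet S →
    μ x S = ENNReal.ofReal (Complex.re (inner ℂ x (E S x)))
  integral_id : ∀ x : H, Complex.re (inner ℂ x (A x)) = ∫ t, t ∂(μ x)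
  integral_sq : ∀ x : H, ‖A x‖ ^ 2 = ∫ t, t ^ 2 ∂(μ x)

open Set Filter

section Operator

variable {𝕜 E F : Type*} [RCLike 𝕜] [NormedAddCommGroup E] [InnerProductSpace 𝕜 E]
  [CompleteSpace E] [NormedAddCommGroup F] [InnerProductSpace 𝕜 F] [CompleteSpace F]

theorem ContinuousLinearMap.re_inner_apply_eq_norm_sq {P : E →L[𝕜] E} (hP : IsSelfAdjoint P)
    (hPP : IsIdempotentElem P) (x : E) : RCLike.re (inner 𝕜 x (P x)) = ‖P x‖ ^ 2 := by
  have hPx : P (P x) = P x := congr($(hPP.eq) x)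
  calc RCLike.re (inner 𝕜 x (P x)) = RCLike.re (inner 𝕜 x (P (P x))) := by rw [hPx]
    _ = RCLike.re (inner 𝕜 (P x) (P x)) := congrArg _ (hP.isSymmetric x (P x)).symm
    _ = ‖P x‖ ^ 2 := inner_self_eq_norm_sq _

theorem ContinuousLinearMap.norm_apply_eq_of_comp_self_eq_adjoint_comp {A : E →L[𝕜] E}
    {T : E →L[𝕜] F} (hA : IsSelfAdjoint A) (hAT : A ∘L A = adjoint T ∘L T) (x : E) :
    ‖A x‖ = ‖T x‖ := by
  have h := A.apply_norm_sq_eq_inner_adjoint_left x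
  rw [hA.adjoint_eq, hAT, ← apply_norm_sq_eq_inner_adjoint_left] at h
  exact (sq_eq_sq₀ (norm_nonneg _) (norm_nonneg _)).1 h

end Operator

theorem MeasureTheory.integrable_of_ae_mem_isCompact {X : Type*} [TopologicalSpace X]
    [T2Space X] [MeasurableSpace X] [OpensMeasurableSpace X] {ν : Measure X} [IsFiniteMeasure ν]
    {K : Set X} {f : X → ℝ} (hK : IsCompact K) (hf : ContinuousOn f K) (h : ∀ᵐ x ∂ν, x ∈ K) :
    Integrable f ν := by
  rw [← Measure.restrict_eq_self_of_ae_mem h]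
  exact hf.integrableOn_compact hK

namespace IsSpectralMeasureOf

variable {H : Type*} [NormedAddCommGroup H] [InnerProductSpace ℂ H] [CompleteSpace H]
  {A : H →L[ℂ] H} {E : Set ℝ → (H →L[ℂ] H)} {μ : H → Measure ℝ} {S : Set ℝ}

open Classical in
noncomputable def vectorMeasure (hE : IsSpectralMeasureOf A E μ) (x : H) : VectorMeasure ℝ H where
  measureOf' S := if MeasurableSet S then E S x else 0
  empty' := by simp [hE.empty]
  not_measurable' _ hS := if_neg hS
  m_iUnion' f hf hd := by
    simpa [hf, MeasurableSet.iUnion hf] using hE.countablyAdditive f hd hf x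

variable (hE : IsSpectralMeasureOf A E μ)
include hE

theorem apply_add_apply_compl (hS : MeasurableSet S) (x : H) : E S x + E Sᶜ x = x := by
  have h := (hE.vectorMeasure x).of_union disjoint_compl_right hS hS.compl
  simpa [vectorMeasure, hS, hS.compl, hE.univ] using h.symm

theorem measure_apply (hS : MeasurableSet S) (x : H) : μ x S = ENNReal.ofReal (‖E S x‖ ^ 2) := by
  rw [hE.mu_eq x S hS, ← RCLike.re_to_complex,
    (E S).re_inner_apply_eq_norm_sq (hE.selfAdjoint S) (hE.idem S)]

theorem isFiniteMeasure (x : H) : IsFiniteMeasure (μ x) :=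
  ⟨by simp [hE.measure_apply MeasurableSet.univ, hE.univ]⟩

theorem measureReal_univ (x : H) : (μ x).real Set.univ = ‖x‖ ^ 2 := by
  simp [measureReal_def, hE.measure_apply MeasurableSet.univ, hE.univ]

theorem measure_eq_zero_iff (hS : MeasurableSet S) (x : H) : μ x S = 0 ↔ E S x = 0 := by
  simp [hE.measure_apply hS]

theorem mem_range_iff_apply_compl_eq_zero (hS : MeasurableSet S) (x : H) :
    x ∈ LinearMap.range (E S : H →ₗ[ℂ] H) ↔ E Sᶜ x = 0 := by
  constructor
  · rintro ⟨y, rfl⟩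
    simp [← ContinuousLinearMap.comp_apply, hE.inter _ _ hS.compl hS, hE.empty]
  · intro h
    exact ⟨x, by simpa [h] using hE.apply_add_apply_compl hS x⟩

theorem mem_range_iff_ae_mem (hS : MeasurableSet S) (x : H) :
    x ∈ LinearMap.range (E S : H →ₗ[ℂ] H) ↔ ∀ᵐ t ∂μ x, t ∈ S := by
  rw [hE.mem_range_iff_apply_compl_eq_zero hS, ae_iff, ← hE.measure_eq_zero_iff hS.compl]
  rfl

theorem apply_eq_zero_of_subset_Icc {a b : ℝ} (hS : MeasurableSet S) (hSab : S ⊆ Icc a b)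
    (ha : ‖A‖ < a) (x : H) : E S x = 0 := by
  set y := E S x
  have := hE.isFiniteMeasure y
  have hy : ∀ᵐ t ∂μ y, t ∈ Icc a b :=
    ((hE.mem_range_iff_ae_mem hS y).1 ⟨x, rfl⟩).mono fun t ht => hSab ht
  have hlow : a ^ 2 * ‖y‖ ^ 2 ≤ ‖A y‖ ^ 2 :=
    calc a ^ 2 * ‖y‖ ^ 2 = ∫ _, a ^ 2 ∂μ y := by simp [hE.measureReal_univ, mul_comm]
      _ ≤ ∫ t, t ^ 2 ∂μ y := by
        refine integral_mono_ae (integrable_const _)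
          (integrable_of_ae_mem_isCompact isCompact_Icc (by fun_prop) hy) ?_
        filter_upwards [hy] with t ht
        exact pow_le_pow_left₀ ((norm_nonneg A).trans ha.le) ht.1 2
      _ = ‖A y‖ ^ 2 := (hE.integral_sq y).symm
  have hup : ‖A y‖ ≤ ‖A‖ * ‖y‖ := A.le_opNorm y
  have hsq : a ^ 2 * ‖y‖ ^ 2 ≤ ‖A‖ ^ 2 * ‖y‖ ^ 2 :=
    hlow.trans (by rw [← mul_pow]; exact pow_le_pow_left₀ (norm_nonneg _) hup 2)
  have hgap : ‖A‖ ^ 2 < a ^ 2 := pow_lt_pow_left₀ ha (norm_nonneg _) two_ne_zero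
  have hy0 : ‖y‖ ^ 2 = 0 := by nlinarith [sq_nonneg ‖y‖]
  exact norm_eq_zero.1 (pow_eq_zero_iff two_ne_zero |>.1 hy0)

theorem measure_Ioi_opNorm_eq_zero (x : H) : μ x (Ioi ‖A‖) = 0 := by
  -- Bounded pieces: `integral_sq` carries information only where `t ^ 2` is integrable.
  have hcover : Ioi ‖A‖ ⊆ ⋃ (m : ℕ) (n : ℕ), Icc (‖A‖ + 1 / (m + 1)) n := by
    intro t ht
    obtain ⟨m, hm⟩ := exists_nat_one_div_lt (sub_pos.2 (mem_Ioi.1 ht))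
    obtain ⟨n, hn⟩ := exists_nat_ge t
    exact mem_iUnion₂.2 ⟨m, n, by linarith, hn⟩
  refine measure_mono_null hcover (measure_iUnion_null fun m => measure_iUnion_null fun n => ?_)
  rw [hE.measure_eq_zero_iff measurableSet_Icc]
  exact hE.apply_eq_zero_of_subset_Icc measurableSet_Icc le_rfl
    (lt_add_of_pos_right _ Nat.one_div_pos_of_nat) x

theorem ae_mem_Icc (x : H) : ∀ᵐ t ∂μ x, t ∈ Icc 0 ‖A‖ := by
  have hneg : μ x (Iio 0) = 0 := by
    rw [hE.measure_eq_zero_iff measurableSet_Iio, hE.suppNonneg]; rfl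
  filter_upwards [measure_eq_zero_iff_ae_notMem.1 hneg,
    measure_eq_zero_iff_ae_notMem.1 (hE.measure_Ioi_opNorm_eq_zero x)] with t h0 h1
  exact ⟨not_lt.1 h0, not_lt.1 h1⟩

theorem norm_apply_eq_opNorm_mul_iff (x : H) :
    ‖A x‖ = ‖A‖ * ‖x‖ ↔ ∀ᵐ t ∂μ x, t = ‖A‖ := by
  have := hE.isFiniteMeasure x
  have hsupp := hE.ae_mem_Icc x
  have hint : Integrable (fun t : ℝ => t ^ 2) (μ x) :=
    integrable_of_ae_mem_isCompact isCompact_Icc (by fun_prop) hsupp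
  have hgap : ∫ t, (‖A‖ ^ 2 - t ^ 2) ∂μ x = ‖A‖ ^ 2 * ‖x‖ ^ 2 - ‖A x‖ ^ 2 := by
    rw [integral_sub (integrable_const _) hint, integral_const, smul_eq_mul,
      hE.measureReal_univ, hE.integral_sq, mul_comm]
  have hnonneg : 0 ≤ᵐ[μ x] fun t => ‖A‖ ^ 2 - t ^ 2 := by
    filter_upwards [hsupp] with t ht
    exact sub_nonneg.2 (pow_le_pow_left₀ ht.1 ht.2 2)
  calc ‖A x‖ = ‖A‖ * ‖x‖ ↔ ∫ t, (‖A‖ ^ 2 - t ^ 2) ∂μ x = 0 := by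
        rw [hgap, sub_eq_zero, ← mul_pow, sq_eq_sq₀ (by positivity) (norm_nonneg _), eq_comm]
    _ ↔ (fun t => ‖A‖ ^ 2 - t ^ 2) =ᵐ[μ x] 0 :=
        integral_eq_zero_iff_of_nonneg_ae hnonneg ((integrable_const _).sub hint)
    _ ↔ ∀ᵐ t ∂μ x, t = ‖A‖ := by
        refine eventually_congr (hsupp.mono fun t ht => ?_)
        simp only [Pi.zero_apply, sub_eq_zero, eq_comm (a := ‖A‖ ^ 2)]
        exact sq_eq_sq₀ ht.1 (norm_nonneg A)

theorem setOf_norm_apply_eq_opNorm_mul :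
    {x : H | ‖A x‖ = ‖A‖ * ‖x‖} = (LinearMap.range (E {‖A‖} : H →ₗ[ℂ] H) : Set H) := by
  ext x
  exact (hE.norm_apply_eq_opNorm_mul_iff x).trans
    (hE.mem_range_iff_ae_mem (measurableSet_singleton _) x).symm

end IsSpectralMeasureOf

/-- For a bounded operator `T` on a complex Hilbert space and `A = sqrt (T* T)` with
spectral measure `E`, the set of vectors `x` with `‖T x‖ = ‖T‖ ‖x‖` is exactly the closed
subspace `E({‖T‖}) H`, the range of the spectral projection of `A` at `{‖T‖}`. -/
theorem norm_attaining_vectors_eq_spectral_subspace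
    {H : Type*} [NormedAddCommGroup H] [InnerProductSpace ℂ H] [CompleteSpace H]
    (T : H →L[ℂ] H) (A : H →L[ℂ] H)
    (hA : A.IsPositive)
    (hAA : A ∘L A = ContinuousLinearMap.adjoint T ∘L T)
    (E : Set ℝ → (H →L[ℂ] H)) (μmeas : H → Measure ℝ)
    (hE : IsSpectralMeasureOf A E μmeas) :
    {x : H | ‖T x‖ = ‖T‖ * ‖x‖} = (LinearMap.range (E {‖T‖} : H →ₗ[ℂ] H) : Set H) := by
  have hAT := A.norm_apply_eq_of_comp_self_eq_adjoint_comp hA.isSelfAdjoint hAA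
  have hnorm : ‖A‖ = ‖T‖ := A.opNorm_ext T hAT
  simp_rw [← hAT, ← hnorm]
  exact hE.setOf_norm_apply_eq_opNorm_mul
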